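/- Let X be a 0-dimensional space. Then the map u ↦ (f ↦ ∑_{x∈X} f(x)·u(x)) is a group isomorphism from the group 𝕋^(X) of finitely supported functions X → 𝕋 onto the group of all continuous characters of C_p(X,ℤ). In particular, a group homomorphism χ : C_p(X,ℤ) → 𝕋 is continuous if and only if there exist a finite set F ⊆ X and elements t_x ∈ 𝕋 (x ∈ F) with χ(f) = ∑_{x∈F} f(x)·t_x for all f ∈ C(X,ℤ). -/

import Mathlib

open TopologicalSpace

/-- The circle group `𝕋 = ℝ/ℤ`. -/
abbrev Circ : Type := AddCircle (1 : ℝ)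

/-- `C_p(X,ℤ)`: the group of continuous functions `X → ℤ` (with `ℤ` discrete) under
pointwise addition, equipped with the topology of pointwise convergence (the subspace
topology from the product `ℤ^X`). -/
def CpZ (X : Type*) [TopologicalSpace X] : Type _ := C(X, ℤ)

noncomputable instance (X : Type*) [TopologicalSpace X] : FunLike (CpZ X) X ℤ :=
  inferInstanceAs (FunLike C(X, ℤ) X ℤ)

noncomputable instance (X : Type*) [TopologicalSpace X] : AddCommGroup (CpZ X) :=
  inferInstanceAs (AddCommGroup C(X, ℤ))

noncomputable instance (X : Type*) [TopologicalSpace X] : TopologicalSpace (CpZ X) :=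
  TopologicalSpace.induced (fun f : CpZ X => (f : X → ℤ)) Pi.topologicalSpace

/-- The group of continuous characters of `C_p(X,ℤ)`, as a subgroup of the group of all
homomorphisms `C_p(X,ℤ) →+ 𝕋` under pointwise addition. -/
noncomputable def contCharGroup (X : Type*) [TopologicalSpace X] :
    AddSubgroup (CpZ X →+ Circ) where
  carrier := {χ | Continuous χ}
  zero_mem' := continuous_const
  add_mem' := fun {a b} ha hb => Continuous.add ha hb
  neg_mem' := fun {a} ha => Continuous.neg ha

/-! ### Auxiliary lemmas about the circle -/

lemma circ_norm_ge {y : ℝ} (h1 : 1/4 ≤ y) (h2 : y ≤ 3/4) : 1/4 ≤ ‖(y : Circ)‖ := by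
  rw [AddCircle.norm_eq, inv_one, one_mul, mul_one]
  rcases le_or_gt ((round y : ℤ) : ℝ) 0 with hm | hm
  · exact le_abs.2 (Or.inl (by linarith))
  · have h1' : (1:ℤ) ≤ round y := Int.cast_pos.mp hm
    have : (1:ℝ) ≤ (round y : ℝ) := by exact_mod_cast h1'
    exact le_abs.2 (Or.inr (by linarith))

lemma exists_big (x : ℝ) (hx0 : 0 < x) (hx2 : x ≤ 1/2) :
    ∃ n : ℕ, 1/4 ≤ ‖(((n : ℝ) * x : ℝ) : Circ)‖ := by
  have hex : ∃ n : ℕ, 1/4 ≤ (n : ℝ) * x := by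
    obtain ⟨n, hn⟩ := exists_nat_ge ((1/4) / x)
    exact ⟨n, (div_le_iff₀ hx0).1 hn⟩
  classical
  set n := Nat.find hex with hndef
  have hn : 1/4 ≤ (n : ℝ) * x := Nat.find_spec hex
  have hpos : n ≠ 0 := by
    intro h
    rw [h] at hn; norm_num at hn
  have hlt : ¬ (1/4 ≤ ((n - 1 : ℕ) : ℝ) * x) := Nat.find_min hex (by omega)
  push_neg at hlt
  have hcast : ((n - 1 : ℕ) : ℝ) = (n : ℝ) - 1 := by
    have : 1 ≤ n := Nat.one_le_iff_ne_zero.2 hpos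
    push_cast [Nat.cast_sub this]
    ring
  rw [hcast] at hlt
  have hub : (n : ℝ) * x ≤ 3/4 := by nlinarith
  exact ⟨n, circ_norm_ge hn hub⟩

lemma small_orbit_eq_zero (s : Circ) (hs : ∀ n : ℤ, ‖n • s‖ < 1/4) : s = 0 := by
  haveI : Fact ((0:ℝ) < 1) := ⟨one_pos⟩
  by_contra hne
  obtain ⟨x, hx, rfl⟩ := AddCircle.eq_coe_Ico s
  have hx0 : 0 < x := lt_of_le_of_ne hx.1 (fun h => hne (by rw [← h]; simp))
  rcases le_or_gt x (1/2) with hle | hgt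
  · obtain ⟨n, hn⟩ := exists_big x hx0 hle
    have key : ((n : ℤ) • ((x : ℝ) : Circ)) = (((n : ℝ) * x : ℝ) : Circ) := by
      rw [← AddCircle.coe_zsmul]
      congr 1
      rw [zsmul_eq_mul]
      push_cast
      ring
    exact absurd (hs n) (by rw [key]; exact not_lt.2 hn)
  · have hx1 : x < 1 := hx.2
    have hy0 : (0:ℝ) < 1 - x := by linarith
    have hy2 : (1:ℝ) - x ≤ 1/2 := by linarith
    obtain ⟨n, hn⟩ := exists_big (1 - x) hy0 hy2
    have hneg : (((1:ℝ) - x : ℝ) : Circ) = -((x : ℝ) : Circ) := by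
      rw [AddCircle.coe_sub, AddCircle.coe_period, zero_sub]
    have key : ((-(n : ℤ)) • ((x : ℝ) : Circ)) = (((n : ℝ) * (1 - x) : ℝ) : Circ) := by
      rw [neg_zsmul, ← zsmul_neg, ← hneg, ← AddCircle.coe_zsmul]
      congr 1
      rw [zsmul_eq_mul]
      push_cast
      ring
    exact absurd (hs (-(n:ℤ))) (by rw [key]; exact not_lt.2 hn)

/-! ### Auxiliary lemmas about `CpZ` -/

section CpZ

variable {X : Type*} [TopologicalSpace X]

open scoped Classical

/-- Evaluation at a point, as an additive homomorphism. -/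
noncomputable def evalHom (x : X) : CpZ X →+ ℤ := AddMonoidHom.mk' (fun f => f x) (fun _ _ => rfl)

lemma cpz_add_apply (f g : CpZ X) (x : X) : (f + g) x = f x + g x := rfl

lemma cpz_sub_apply (f g : CpZ X) (x : X) : (f - g) x = f x - g x :=
  map_sub (evalHom x) f g

lemma cpz_zsmul_apply (n : ℤ) (f : CpZ X) (x : X) : (n • f) x = n • f x :=
  map_zsmul (evalHom x) n f

lemma cpz_sum_apply {ι : Type*} (s : Finset ι) (g : ι → CpZ X) (x : X) :
    (∑ i ∈ s, g i) x = ∑ i ∈ s, g i x :=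
  map_sum (evalHom x) g s

/-- The characteristic function of a clopen set, as an element of `CpZ X`. -/
noncomputable def charFn {U : Set X} (hU : IsClopen U) : CpZ X :=
  { toFun := fun y => if y ∈ U then (1:ℤ) else 0
    continuous_toFun := by
      refine Continuous.if (fun a ha => ?_) continuous_const continuous_const
      rw [Set.setOf_mem_eq, hU.frontier_eq] at ha
      exact ha.elim }

lemma charFn_apply {U : Set X} (hU : IsClopen U) (y : X) :
    charFn hU y = if y ∈ U then (1:ℤ) else 0 := rfl

lemma charFn_of_mem {U : Set X} (hU : IsClopen U) {y : X} (hy : y ∈ U) :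
    charFn hU y = 1 := by
  rw [charFn_apply, if_pos hy]

lemma charFn_of_not_mem {U : Set X} (hU : IsClopen U) {y : X} (hy : y ∉ U) :
    charFn hU y = 0 := by
  rw [charFn_apply, if_neg hy]

/-- Separation of a point from a finite set by a clopen set. -/
lemma sep [T2Space X] (h0 : IsTopologicalBasis {s : Set X | IsClopen s})
    (S : Finset X) (x : X) :
    ∃ U : Set X, IsClopen U ∧ x ∈ U ∧ ∀ y ∈ S, y ∈ U → y = x := by
  have hcl : IsClosed ((S.erase x : Finset X) : Set X) := (S.erase x).finite_toSet.isClosed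
  have hxo : x ∈ (↑(S.erase x) : Set X)ᶜ := by simp
  obtain ⟨U, hU, hxU, hUsub⟩ := h0.exists_subset_of_mem_open hxo hcl.isOpen_compl
  refine ⟨U, hU, hxU, fun y hy hyU => ?_⟩
  by_contra h
  exact hUsub hyU (Finset.mem_coe.2 (Finset.mem_erase.2 ⟨h, hy⟩))

/-- Characters of the prescribed finite form are continuous. -/
lemma cont_of_form (F : Finset X) (t : X → Circ) :
    Continuous fun f : CpZ X => ∑ x ∈ F, f x • t x := by
  refine continuous_finset_sum _ (fun x _ => ?_)
  have h1 : Continuous fun f : CpZ X => f x :=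
    (continuous_apply x).comp continuous_induced_dom
  exact (continuous_of_discreteTopology (f := fun n : ℤ => n • t x)).comp h1

/-- Every continuous character has the prescribed finite form. -/
lemma exists_form [T2Space X] (h0 : IsTopologicalBasis {s : Set X | IsClopen s})
    (χ : CpZ X →+ Circ) (hχ : Continuous χ) :
    ∃ (F : Finset X) (t : X → Circ), ∀ f : CpZ X, χ f = ∑ x ∈ F, f x • t x := by
  classical
  have hball : Metric.ball (0:Circ) (1/4) ∈ nhds (χ 0) := by
    rw [map_zero]; exact Metric.ball_mem_nhds _ (by norm_num)
  have hpre : χ ⁻¹' Metric.ball 0 (1/4) ∈ nhds (0 : CpZ X) :=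
    hχ.continuousAt.preimage_mem_nhds hball
  rw [nhds_induced] at hpre
  obtain ⟨S, hS, hSsub⟩ := Filter.mem_comap.1 hpre
  rw [show ((0 : CpZ X) : X → ℤ) = (0 : X → ℤ) from rfl, nhds_pi] at hS
  obtain ⟨F, V, hV, hVsub⟩ := Filter.mem_pi'.1 hS
  have hvanish : ∀ f : CpZ X, (∀ x ∈ F, f x = 0) → ‖χ f‖ < 1/4 := by
    intro f hf
    have hfS : (f : X → ℤ) ∈ S := by
      apply hVsub
      intro x hxF
      have : f x = 0 := hf x hxF
      rw [show (f : X → ℤ) x = f x from rfl, this]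
      exact mem_of_mem_nhds (by simpa using hV x)
    have := hSsub hfS
    simpa [mem_ball_zero_iff] using this
  have hker : ∀ f : CpZ X, (∀ x ∈ F, f x = 0) → χ f = 0 := by
    intro f hf
    apply small_orbit_eq_zero
    intro n
    rw [← map_zsmul χ n f]
    exact hvanish _ (fun x hx => by rw [cpz_zsmul_apply, hf x hx, smul_zero])
  choose U hUc hxU hUsep using fun x : X => sep h0 F x
  refine ⟨F, fun x => χ (charFn (hUc x)), fun f => ?_⟩
  have hzero : χ (f - ∑ x ∈ F, f x • charFn (hUc x)) = 0 := by
    apply hker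
    intro y hy
    rw [cpz_sub_apply, cpz_sum_apply, Finset.sum_eq_single y]
    · rw [cpz_zsmul_apply, charFn_of_mem _ (hxU y), smul_eq_mul, mul_one, sub_self]
    · intro x hx hxy
      rw [cpz_zsmul_apply, charFn_of_not_mem, smul_zero]
      intro hyU
      exact hxy (hUsep x y hy hyU).symm
    · intro hyF; exact absurd hy hyF
  rw [map_sub, map_sum] at hzero
  have hcongr : ∀ x ∈ F, χ (f x • charFn (hUc x)) = f x • χ (charFn (hUc x)) :=
    fun x _ => map_zsmul χ _ _
  rw [Finset.sum_congr rfl hcongr] at hzero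
  exact sub_eq_zero.1 hzero

end CpZ

/-- For a `0`-dimensional space `X`, the map `u ↦ (f ↦ ∑ f x • u x)` is a group
isomorphism from `𝕋^(X)` (finitely supported) onto the continuous characters of
`C_p(X,ℤ)`; in particular a character is continuous iff it has the form
`f ↦ ∑_{x ∈ F} f x • t x` for a finite `F ⊆ X`. -/
theorem stmt14 (X : Type*) [TopologicalSpace X] [T2Space X]
    (h0 : IsTopologicalBasis {s : Set X | IsClopen s}) :
    (∃ e : (X →₀ Circ) ≃+ contCharGroup X,
      ∀ (u : X →₀ Circ) (f : CpZ X), (e u).1 f = u.sum fun x t => f x • t) ∧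
    (∀ χ : CpZ X →+ Circ, Continuous χ ↔
      ∃ (F : Finset X) (t : X → Circ), ∀ f : CpZ X, χ f = ∑ x ∈ F, f x • t x) := by
  classical
  -- the map `u ↦ (f ↦ ∑ f x • u x)` as a homomorphism into characters
  have hcont : ∀ u : X →₀ Circ,
      Continuous fun f : CpZ X => u.sum fun x t => f x • t := by
    intro u
    exact cont_of_form u.support (fun x => u x)
  let Φ : (X →₀ Circ) →+ (CpZ X →+ Circ) :=
    { toFun := fun u => AddMonoidHom.mk' (fun f => u.sum fun x t => f x • t)
        (fun f g => by
          simp only [cpz_add_apply, add_smul]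
          exact Finsupp.sum_add)
      map_zero' := by
        apply AddMonoidHom.ext
        intro f
        simp [Finsupp.sum_zero_index]
      map_add' := fun u v => by
        apply AddMonoidHom.ext
        intro f
        exact Finsupp.sum_add_index' (fun x => smul_zero _) (fun x b c => smul_add _ b c) }
  have hΦ_mem : ∀ u, Φ u ∈ contCharGroup X := fun u => hcont u
  let Φ' : (X →₀ Circ) →+ contCharGroup X := Φ.codRestrict _ hΦ_mem
  have hinj : Function.Injective Φ' := by
    rw [injective_iff_map_eq_zero]
    intro u hu
    have hu' : Φ u = 0 := Subtype.ext_iff.1 hu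
    ext x
    by_contra hx
    have hxs : x ∈ u.support := Finsupp.mem_support_iff.2 hx
    obtain ⟨U, hUc, hxU, hUsep⟩ := sep h0 u.support x
    have h1 : Φ u (charFn hUc) = 0 := by rw [hu']; rfl
    have h2 : Φ u (charFn hUc) = u x := by
      show (u.sum fun y t => charFn hUc y • t) = u x
      rw [Finsupp.sum, Finset.sum_eq_single x]
      · rw [charFn_of_mem _ hxU, one_smul]
      · intro y hy hyx
        rw [charFn_of_not_mem, zero_smul]
        intro hyU
        exact hyx (hUsep y hy hyU)
      · intro hxs'; exact absurd hxs hxs'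
    exact hx (h2 ▸ h1)
  have hsurj : Function.Surjective Φ' := by
    rintro ⟨χ, hχ⟩
    obtain ⟨F, t, ht⟩ := exists_form h0 χ hχ
    refine ⟨∑ x ∈ F, Finsupp.single x (t x), Subtype.ext (AddMonoidHom.ext fun f => ?_)⟩
    show ((∑ x ∈ F, Finsupp.single x (t x)).sum fun x s => f x • s) = χ f
    have hφ : ∀ x : X, ∃ φ : Circ →+ Circ, ∀ s, φ s = f x • s :=
      fun x => ⟨AddMonoidHom.mk' (fun s => f x • s) (fun a b => smul_add _ a b), fun _ => rfl⟩
    choose φ hφval using hφ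
    have hlift : ∀ v : X →₀ Circ, (v.sum fun x s => f x • s) = Finsupp.liftAddHom φ v := by
      intro v
      rw [Finsupp.liftAddHom_apply]
      exact Finsupp.sum_congr (fun x _ => (hφval x (v x)).symm)
    rw [hlift, map_sum]
    rw [Finset.sum_congr rfl (fun x _ => Finsupp.liftAddHom_apply_single φ x (t x))]
    rw [Finset.sum_congr rfl (fun x _ => hφval x (t x))]
    exact (ht f).symm
  refine ⟨⟨AddEquiv.ofBijective Φ' ⟨hinj, hsurj⟩, fun u f => rfl⟩, fun χ => ?_⟩
  constructor
  · exact fun hχ => exists_form h0 χ hχ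
  · rintro ⟨F, t, ht⟩
    have hc := cont_of_form F t
    rwa [show (fun f : CpZ X => ∑ x ∈ F, f x • t x) = ⇑χ from (funext ht).symm] at hc
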